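/- arXiv:2109.14110 — 4 statements merged into one kernel-verified Lean document; each statement's English description precedes it below -/
import Mathlib

section
/- Let x₀, x₁, x₂, x₃ be real numbers and α, β, γ ∈ {0,1}. Suppose ⌊x₀−x₂⌋ − ⌊x₀−x₁⌋ = ⌊x₁−x₂⌋ + α, ⌊x₀−x₃⌋ − ⌊x₀−x₁⌋ = ⌊x₁−x₃⌋ + β, and ⌊x₀−x₃⌋ − ⌊x₀−x₂⌋ = ⌊x₂−x₃⌋ + γ. Then β ≤ α + γ ≤ β + 1. -/
/-! Subtracting `h12` and `h23` from `h13` eliminates `x₀` and leaves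
`α + γ - β = ⌊x₁ - x₃⌋ - ⌊x₁ - x₂⌋ - ⌊x₂ - x₃⌋`, and the floor of a sum exceeds the sum of
the floors by `0` or `1`. -/

theorem Int.floor_sub_bounds {R : Type*} [Ring R] [LinearOrder R] [IsOrderedRing R] [FloorRing R]
    (x y z : R) :
    ⌊x - y⌋ + ⌊y - z⌋ ≤ ⌊x - z⌋ ∧ ⌊x - z⌋ ≤ ⌊x - y⌋ + ⌊y - z⌋ + 1 := by
  have hsum : x - z = (x - y) + (y - z) := by abel
  rw [hsum]
  exact ⟨Int.le_floor_add _ _, by linarith [Int.le_floor_add_floor (x - y) (y - z)]⟩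

theorem triple_relation_ineq_general (x₀ x₁ x₂ x₃ : ℝ) (α β γ : ℤ)
    (h12 : ⌊x₀ - x₂⌋ - ⌊x₀ - x₁⌋ = ⌊x₁ - x₂⌋ + α)
    (h13 : ⌊x₀ - x₃⌋ - ⌊x₀ - x₁⌋ = ⌊x₁ - x₃⌋ + β)
    (h23 : ⌊x₀ - x₃⌋ - ⌊x₀ - x₂⌋ = ⌊x₂ - x₃⌋ + γ) :
    β ≤ α + γ ∧ α + γ ≤ β + 1 := by
  obtain ⟨hlow, hhigh⟩ := Int.floor_sub_bounds x₁ x₂ x₃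
  omega

theorem triple_relation_ineq (x₀ x₁ x₂ x₃ : ℝ) (α β γ : ℤ)
    (hα : α = 0 ∨ α = 1) (hβ : β = 0 ∨ β = 1) (hγ : γ = 0 ∨ γ = 1)
    (h12 : ⌊x₀ - x₂⌋ - ⌊x₀ - x₁⌋ = ⌊x₁ - x₂⌋ + α)
    (h13 : ⌊x₀ - x₃⌋ - ⌊x₀ - x₁⌋ = ⌊x₁ - x₃⌋ + β)
    (h23 : ⌊x₀ - x₃⌋ - ⌊x₀ - x₂⌋ = ⌊x₂ - x₃⌋ + γ) :
    β ≤ α + γ ∧ α + γ ≤ β + 1 :=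
  triple_relation_ineq_general x₀ x₁ x₂ x₃ α β γ h12 h13 h23
end

section
/- Let x₀, x₁, x₂, x₃ be real numbers. It is impossible that simultaneously ⌊x₀−x₂⌋ − ⌊x₀−x₁⌋ = ⌊x₁−x₂⌋, ⌊x₀−x₃⌋ − ⌊x₀−x₁⌋ = ⌊x₁−x₃⌋ + 1, and ⌊x₀−x₃⌋ − ⌊x₀−x₂⌋ = ⌊x₂−x₃⌋ (i.e., the triple of relations (R⁰₁₂, R¹₁₃, R⁰₂₃) cannot all hold). -/
theorem not_R0_R1_R0 (x₀ x₁ x₂ x₃ : ℝ) :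
    ¬ (⌊x₀ - x₂⌋ - ⌊x₀ - x₁⌋ = ⌊x₁ - x₂⌋ ∧
       ⌊x₀ - x₃⌋ - ⌊x₀ - x₁⌋ = ⌊x₁ - x₃⌋ + 1 ∧
       ⌊x₀ - x₃⌋ - ⌊x₀ - x₂⌋ = ⌊x₂ - x₃⌋) := by
  rintro ⟨h₁₂, h₁₃, h₂₃⟩
  have hsuperadd : ⌊x₁ - x₂⌋ + ⌊x₂ - x₃⌋ ≤ ⌊x₁ - x₃⌋ := by
    simpa only [sub_add_sub_cancel] using Int.le_floor_add (x₁ - x₂) (x₂ - x₃)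
  -- the three relations telescope to ⌊x₁ - x₂⌋ + ⌊x₂ - x₃⌋ = ⌊x₁ - x₃⌋ + 1
  omega
end

section
/- Let x₀, x₁, x₂, x₃ be real numbers. It is impossible that simultaneously ⌊x₀−x₂⌋ − ⌊x₀−x₁⌋ = ⌊x₁−x₂⌋ + 1, ⌊x₀−x₃⌋ − ⌊x₀−x₁⌋ = ⌊x₁−x₃⌋, and ⌊x₀−x₃⌋ − ⌊x₀−x₂⌋ = ⌊x₂−x₃⌋ + 1 (i.e., the triple of relations (R¹₁₂, R⁰₁₃, R¹₂₃) cannot all hold). -/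
/-!
The defect `c(a, b) = ⌊a + b⌋ - ⌊a⌋ - ⌊b⌋` of the floor function is at most `1` and, being the
coboundary of `⌊·⌋`, satisfies the 2-cocycle identity `c(a, b) + c(a + b, d) = c(a, b + d) + c(b, d)`.
The relation `R^α_{ij}` says `c(x₀ - xᵢ, xᵢ - xⱼ) = α`, so with `a, b, d = x₀ - x₁, x₁ - x₂, x₂ - x₃`
the three relations force `1 + 1 = 0 + c(x₁ - x₂, x₂ - x₃)`, i.e. a defect of `2`.
-/

namespace Int

variable {R : Type*} [Ring R] [LinearOrder R] [FloorRing R]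

def floorCarry (a b : R) : ℤ := ⌊a + b⌋ - ⌊a⌋ - ⌊b⌋

theorem floorCarry_add_floorCarry (a b d : R) :
    floorCarry a b + floorCarry (a + b) d = floorCarry a (b + d) + floorCarry b d := by
  unfold floorCarry
  rw [add_assoc]
  ring

theorem floorCarry_sub_sub (x y z : R) :
    floorCarry (x - y) (y - z) = ⌊x - z⌋ - ⌊x - y⌋ - ⌊y - z⌋ := by
  rw [floorCarry, sub_add_sub_cancel]

theorem floorCarry_le_one [IsStrictOrderedRing R] (a b : R) : floorCarry a b ≤ 1 := by
  have := le_floor_add_floor a b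
  unfold floorCarry
  omega

end Int

theorem not_R1_R0_R1 (x₀ x₁ x₂ x₃ : ℝ) :
    ¬ (⌊x₀ - x₂⌋ - ⌊x₀ - x₁⌋ = ⌊x₁ - x₂⌋ + 1 ∧
       ⌊x₀ - x₃⌋ - ⌊x₀ - x₁⌋ = ⌊x₁ - x₃⌋ ∧
       ⌊x₀ - x₃⌋ - ⌊x₀ - x₂⌋ = ⌊x₂ - x₃⌋ + 1) := by
  rintro ⟨h₁₂, h₁₃, h₂₃⟩
  have cocycle := Int.floorCarry_add_floorCarry (x₀ - x₁) (x₁ - x₂) (x₂ - x₃)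
  have carry_le := Int.floorCarry_le_one (x₁ - x₂) (x₂ - x₃)
  simp only [sub_add_sub_cancel, Int.floorCarry_sub_sub] at cocycle carry_le
  omega
end

section
/- Let k₀₁, k₁₂, k₂₃, K₀₂, K₁₃, K₀₃ be integers with K₀₂ ≤ k₀₁ + k₁₂ − 1, K₁₃ ≤ k₁₂ + k₂₃ − 1, K₀₃ ≤ k₀₁ + K₁₃ − 1, and K₀₃ ≤ K₀₂ + k₂₃ − 1. Let x₀, x₁, x₂, x₃ be real numbers with x₀−x₁ < k₀₁, x₁−x₂ < k₁₂, x₂−x₃ < k₂₃, x₁−x₃ < K₁₃, x₀−x₃ < K₀₃, x₀−x₂ < K₀₂. If ⌊x₀−x₁⌋ = k₀₁ − 1 and ⌊x₀−x₂⌋ = K₀₂ − 1, then setting p_i = ⌊x₀−x_i⌋ for i = 1,2,3, the integers satisfy p₁ ≤ k₀₁−1, p₂ ≤ K₀₂−1, p₃ ≤ K₀₃−1, p₂−p₁ ≤ k₁₂−1, p₃−p₂ ≤ k₂₃−1, p₃−p₁ ≤ K₁₃−1, and the numbers z₀ = x₀, z_i = x_i + p_i (i = 1,2,3) satisfy −1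 < z_i − z_j < 1 for all 0 ≤ i < j ≤ 3. -/
/-!
Since `x₀ - (xᵢ + ⌊x₀ - xᵢ⌋) = fract (x₀ - xᵢ) ∈ [0, 1)`, all the points `zᵢ` lie in the half-open
unit interval `(x₀ - 1, x₀]`, so they are pairwise less than `1` apart. For the integers, `p₁` and
`p₂` are fixed by hypothesis and `p₃ < K₀₃` because `x₀ - x₃ < K₀₃`; the bounds on the differences
are then exactly the constraints `K₀₂ ≤ k₀₁ + k₁₂ - 1`, `K₀₃ ≤ k₀₁ + K₁₃ - 1`, `K₀₃ ≤ K₀₂ + k₂₃ - 1`.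
-/

section FloorShift

variable {R : Type*} [Ring R] [LinearOrder R] [FloorRing R]

theorem sub_add_floor_sub_eq_fract (a b : R) : a - (b + ⌊a - b⌋) = Int.fract (a - b) := by
  rw [← Int.self_sub_floor]
  abel

variable [IsOrderedRing R]

theorem abs_fract_sub_fract_lt_one (a b : R) : |Int.fract a - Int.fract b| < 1 :=
  abs_sub_lt_of_nonneg_of_lt (Int.fract_nonneg a) (Int.fract_lt_one a)
    (Int.fract_nonneg b) (Int.fract_lt_one b)

theorem abs_sub_add_floor_sub_lt_one (a b : R) : |a - (b + ⌊a - b⌋)| < 1 := by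
  rw [sub_add_floor_sub_eq_fract, Int.abs_fract]
  exact Int.fract_lt_one _

theorem abs_add_floor_sub_sub_add_floor_sub_lt_one (a b c : R) :
    |(b + ⌊a - b⌋) - (c + ⌊a - c⌋)| < 1 := by
  have h : (b + ⌊a - b⌋) - (c + ⌊a - c⌋) = Int.fract (a - c) - Int.fract (a - b) := by
    rw [← sub_add_floor_sub_eq_fract a b, ← sub_add_floor_sub_eq_fract a c]
    abel
  rw [h]
  exact abs_fract_sub_fract_lt_one _ _

end FloorShift

theorem lemma_case1_general (k01 k12 k23 K02 K13 K03 : ℤ)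
    (hK02 : K02 ≤ k01 + k12 - 1)
    (hK03a : K03 ≤ k01 + K13 - 1) (hK03b : K03 ≤ K02 + k23 - 1)
    (x₀ x₁ x₂ x₃ : ℝ)
    (h03 : x₀ - x₃ < K03)
    (hf1 : ⌊x₀ - x₁⌋ = k01 - 1) (hf2 : ⌊x₀ - x₂⌋ = K02 - 1) :
    (⌊x₀ - x₁⌋ ≤ k01 - 1 ∧ ⌊x₀ - x₂⌋ ≤ K02 - 1 ∧ ⌊x₀ - x₃⌋ ≤ K03 - 1 ∧
     ⌊x₀ - x₂⌋ - ⌊x₀ - x₁⌋ ≤ k12 - 1 ∧ ⌊x₀ - x₃⌋ - ⌊x₀ - x₂⌋ ≤ k23 - 1 ∧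
     ⌊x₀ - x₃⌋ - ⌊x₀ - x₁⌋ ≤ K13 - 1) ∧
    (|x₀ - (x₁ + ⌊x₀ - x₁⌋)| < 1 ∧ |x₀ - (x₂ + ⌊x₀ - x₂⌋)| < 1 ∧
     |x₀ - (x₃ + ⌊x₀ - x₃⌋)| < 1 ∧
     |(x₁ + ⌊x₀ - x₁⌋) - (x₂ + ⌊x₀ - x₂⌋)| < 1 ∧
     |(x₁ + ⌊x₀ - x₁⌋) - (x₃ + ⌊x₀ - x₃⌋)| < 1 ∧
     |(x₂ + ⌊x₀ - x₂⌋) - (x₃ + ⌊x₀ - x₃⌋)| < 1) := by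
  have hp3 : ⌊x₀ - x₃⌋ ≤ K03 - 1 := Int.le_sub_one_iff.mpr (Int.floor_lt.mpr h03)
  refine ⟨⟨hf1.le, hf2.le, hp3, by omega, by omega, by omega⟩,
    abs_sub_add_floor_sub_lt_one _ _, abs_sub_add_floor_sub_lt_one _ _,
    abs_sub_add_floor_sub_lt_one _ _, abs_add_floor_sub_sub_add_floor_sub_lt_one _ _ _,
    abs_add_floor_sub_sub_add_floor_sub_lt_one _ _ _,
    abs_add_floor_sub_sub_add_floor_sub_lt_one _ _ _⟩

theorem lemma_case1 (k01 k12 k23 K02 K13 K03 : ℤ)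
    (hK02 : K02 ≤ k01 + k12 - 1) (hK13 : K13 ≤ k12 + k23 - 1)
    (hK03a : K03 ≤ k01 + K13 - 1) (hK03b : K03 ≤ K02 + k23 - 1)
    (x₀ x₁ x₂ x₃ : ℝ)
    (h01 : x₀ - x₁ < k01) (h12 : x₁ - x₂ < k12) (h23 : x₂ - x₃ < k23)
    (h13 : x₁ - x₃ < K13) (h03 : x₀ - x₃ < K03) (h02 : x₀ - x₂ < K02)
    (hf1 : ⌊x₀ - x₁⌋ = k01 - 1) (hf2 : ⌊x₀ - x₂⌋ = K02 - 1) :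
    (⌊x₀ - x₁⌋ ≤ k01 - 1 ∧ ⌊x₀ - x₂⌋ ≤ K02 - 1 ∧ ⌊x₀ - x₃⌋ ≤ K03 - 1 ∧
     ⌊x₀ - x₂⌋ - ⌊x₀ - x₁⌋ ≤ k12 - 1 ∧ ⌊x₀ - x₃⌋ - ⌊x₀ - x₂⌋ ≤ k23 - 1 ∧
     ⌊x₀ - x₃⌋ - ⌊x₀ - x₁⌋ ≤ K13 - 1) ∧
    (|x₀ - (x₁ + ⌊x₀ - x₁⌋)| < 1 ∧ |x₀ - (x₂ + ⌊x₀ - x₂⌋)| < 1 ∧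
     |x₀ - (x₃ + ⌊x₀ - x₃⌋)| < 1 ∧
     |(x₁ + ⌊x₀ - x₁⌋) - (x₂ + ⌊x₀ - x₂⌋)| < 1 ∧
     |(x₁ + ⌊x₀ - x₁⌋) - (x₃ + ⌊x₀ - x₃⌋)| < 1 ∧
     |(x₂ + ⌊x₀ - x₂⌋) - (x₃ + ⌊x₀ - x₃⌋)| < 1) :=
  lemma_case1_general k01 k12 k23 K02 K13 K03 hK02 hK03a hK03b x₀ x₁ x₂ x₃ h03 hf1 hf2
end
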